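/- arXiv:1812.11433 — 5 statements merged into one kernel-verified Lean document; each statement's English description precedes it below -/
import Mathlib

section
/- Let P and Q be joint distributions of a pair (X, Y) of discrete random variables with X = (X_1, ..., X_p). Suppose P(Y|X) = Q(Y|X) at all points in the support of P, and P(X) is absolutely continuous with respect to Q(X). If Y is conditionally independent of X_j given X_{-j} under Q, then Y is conditionally independent of X_j given X_{-j} under P. -/
open Finset Function

variable {p : ℕ} {A B : Type*}

/-- `P(X = x)`: the marginal distribution of the covariate vector. -/
def pX [Fintype B] (P : (Fin p → A) × B → ℝ) (x : Fin p → A) : ℝ := ∑ y, P (x, y)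

/-- `P(Y = y)`: the marginal distribution of the response. -/
def pY [Fintype A] (P : (Fin p → A) × B → ℝ) (y : B) : ℝ := ∑ x, P (x, y)

/-- `P(X₋ⱼ = x₋ⱼ)`: probability that all coordinates except `j` agree with `x`. -/
def pXmj [Fintype A] [Fintype B] (P : (Fin p → A) × B → ℝ) (j : Fin p) (x : Fin p → A) : ℝ :=
  ∑ a, pX P (Function.update x j a)

/-- `P(Y = y, X₋ⱼ = x₋ⱼ)`. -/
def pYXmj [Fintype A] (P : (Fin p → A) × B → ℝ) (j : Fin p) (x : Fin p → A) (y : B) : ℝ :=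
  ∑ a, P (Function.update x j a, y)

/-- `P` is a probability distribution on the discrete space `(Fin p → A) × B`. -/
def IsDist [Fintype A] [Fintype B] (P : (Fin p → A) × B → ℝ) : Prop :=
  (∀ z, 0 ≤ P z) ∧ ∑ z, P z = 1

/-- `Y ⊥ Xⱼ | X₋ⱼ` under `P`, stated in cross-multiplied (division-free) form:
wherever the conditioning event `X₋ⱼ = x₋ⱼ` has positive probability,
`P(Y = y, Xⱼ = a | X₋ⱼ) = P(Y = y | X₋ⱼ) · P(Xⱼ = a | X₋ⱼ)`. -/
def CondIndep [Fintype A] [Fintype B] (P : (Fin p → A) × B → ℝ) (j : Fin p) : Prop :=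
  ∀ (x : Fin p → A) (y : B) (a : A), 0 < pXmj P j x →
    P (Function.update x j a, y) * pXmj P j x =
      pYXmj P j x y * pX P (Function.update x j a)

/-!
Under `Q`, conditional independence says that, for fixed `x₋ⱼ` and `y`, the mass
`Q(Xⱼ = a, X₋ⱼ = x₋ⱼ, Y = y)` is proportional to `Q(Xⱼ = a, X₋ⱼ = x₋ⱼ)` as `a` varies. The shared
likelihood `P(Y | X) = Q(Y | X)` carries this proportionality over to `P` on the support of `P(X)`
(where `Q(X)` is positive by absolute continuity), and off that support both sides vanish. Summing
over `a` identifies the factor with `P(Y = y | X₋ⱼ = x₋ⱼ)`, which is conditional independence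
under `P`.
-/

section

variable [Fintype B] {P Q : (Fin p → A) × B → ℝ} {j : Fin p} {x : Fin p → A} {y : B}

lemma pX_nonneg (hP : ∀ z, 0 ≤ P z) (x : Fin p → A) : 0 ≤ pX P x :=
  sum_nonneg fun _ _ => hP _

lemma apply_le_pX (hP : ∀ z, 0 ≤ P z) (x : Fin p → A) (y : B) : P (x, y) ≤ pX P x :=
  single_le_sum (fun b _ => hP (x, b)) (mem_univ y)

lemma apply_eq_zero_of_pX_eq_zero (hP : ∀ z, 0 ≤ P z) (h : pX P x = 0) : P (x, y) = 0 :=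
  le_antisymm (h ▸ apply_le_pX hP x y) (hP _)

lemma pX_pos_of_absolutelyContinuous (hQ : ∀ z, 0 ≤ Q z)
    (hac : ∀ x, pX Q x = 0 → pX P x = 0) (h : 0 < pX P x) : 0 < pX Q x :=
  (pX_nonneg hQ x).lt_of_ne fun h0 => h.ne' (hac x h0.symm)

lemma apply_eq_mul_pX_of_likelihood_eq (hP : ∀ z, 0 ≤ P z) (hQ : ∀ z, 0 ≤ Q z)
    (hlik : 0 < pX P x → P (x, y) * pX Q x = Q (x, y) * pX P x)
    (hac : ∀ x, pX Q x = 0 → pX P x = 0) {c : ℝ} (hQc : Q (x, y) = c * pX Q x) :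
    P (x, y) = c * pX P x := by
  rcases (pX_nonneg hP x).eq_or_lt with h0 | hpos
  · rw [apply_eq_zero_of_pX_eq_zero hP h0.symm, ← h0, mul_zero]
  · apply mul_right_cancel₀ (pX_pos_of_absolutelyContinuous hQ hac hpos).ne'
    rw [hlik hpos, hQc]
    ring

variable [Fintype A]

lemma pXmj_pos_of_absolutelyContinuous (hQ : ∀ z, 0 ≤ Q z)
    (hac : ∀ x, pX Q x = 0 → pX P x = 0) (h : 0 < pXmj P j x) : 0 < pXmj Q j x := by
  obtain ⟨b, -, hb⟩ : ∃ b ∈ univ, 0 < pX P (update x j b) := exists_lt_of_sum_lt (by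
    simpa [pXmj] using h)
  exact (pX_pos_of_absolutelyContinuous hQ hac hb).trans_le
    (single_le_sum (fun a _ => pX_nonneg hQ _) (mem_univ b))

lemma CondIndep.apply_update_eq_mul (h : CondIndep Q j) (hx : 0 < pXmj Q j x) (y : B) (a : A) :
    Q (update x j a, y) = pYXmj Q j x y / pXmj Q j x * pX Q (update x j a) := by
  rw [div_mul_eq_mul_div, eq_div_iff hx.ne']
  exact h x y a hx

lemma condIndep_of_forall_exists_mul
    (h : ∀ x y, 0 < pXmj P j x → ∃ c, ∀ a, P (update x j a, y) = c * pX P (update x j a)) :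
    CondIndep P j := by
  intro x y a hx
  obtain ⟨c, hc⟩ := h x y hx
  have hsum : pYXmj P j x y = c * pXmj P j x := by
    rw [pYXmj, pXmj, mul_sum]
    exact sum_congr rfl fun b _ => hc b
  rw [hc a, hsum]
  ring

end

/-- If `P(Y|X) = Q(Y|X)` on the support of `P` and `P(X) ≪ Q(X)`,
then conditional independence `Y ⊥ Xⱼ | X₋ⱼ` under `Q` implies it under `P`. -/
theorem condIndep_transfer_of_same_likelihood
    [Fintype A] [Fintype B] (P Q : (Fin p → A) × B → ℝ) (j : Fin p)
    (hP : IsDist P) (hQ : IsDist Q)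
    (hlik : ∀ (x : Fin p → A) (y : B), 0 < pX P x → P (x, y) * pX Q x = Q (x, y) * pX P x)
    (hac : ∀ x : Fin p → A, pX Q x = 0 → pX P x = 0)
    (hQind : CondIndep Q j) :
    CondIndep P j := by
  refine condIndep_of_forall_exists_mul fun x y hx => ?_
  have hQx := pXmj_pos_of_absolutelyContinuous hQ.1 hac hx
  refine ⟨pYXmj Q j x y / pXmj Q j x, fun a => ?_⟩
  exact apply_eq_mul_pX_of_likelihood_eq hP.1 hQ.1 (hlik _ y) hac
    (hQind.apply_update_eq_mul hQx y a)
end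

section
/- Let P and Q be joint distributions of a pair (X, Y) of discrete random variables. Suppose P(X|Y) = Q(X|Y) at all points in the support of P, and P(Y) is absolutely continuous with respect to Q(Y). If Y is conditionally independent of X_j given X_{-j} under Q, then Y is conditionally independent of X_j given X_{-j} under P. -/
/-!
Because `X | Y` has the same law under `P` and `Q`, and `P(Y) ≪ Q(Y)`, the distribution `P` is
`Q` reweighted by a function of `y` alone: `P(x, y) = c(y) Q(x, y)` with `c = P(Y) / Q(Y)`.
Conditional independence `Y ⊥ Xⱼ | X₋ⱼ` says that, on each slice `X₋ⱼ = x₋ⱼ`, the joint law of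
`(Xⱼ, Y)` is a product; multiplying it by a factor `c(y)` keeps it a product, and every slice
charged by `P` is charged by `Q`.
-/

open Finset Function

variable {p : ℕ} {A B : Type*}

section Reweight

variable [Fintype A] {P Q : (Fin p → A) × B → ℝ} {c : B → ℝ} {j : Fin p}
  {x : Fin p → A}

theorem pXmj_eq_sum_pYXmj [Fintype B] (P : (Fin p → A) × B → ℝ) (j : Fin p)
    (x : Fin p → A) :
    pXmj P j x = ∑ y, pYXmj P j x y :=
  Finset.sum_comm

theorem pYXmj_eq_mul_of_reweight (hPQ : ∀ x y, P (x, y) = c y * Q (x, y)) (y : B) :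
    pYXmj P j x y = c y * pYXmj Q j x y := by
  simp only [pYXmj, hPQ, Finset.mul_sum]

theorem pXmj_eq_sum_mul_of_reweight [Fintype B] (hPQ : ∀ x y, P (x, y) = c y * Q (x, y)) :
    pXmj P j x = ∑ y, c y * pYXmj Q j x y := by
  simp only [pXmj_eq_sum_pYXmj, pYXmj_eq_mul_of_reweight hPQ]

theorem pXmj_pos_of_reweight [Fintype B] (hQ : ∀ z, 0 ≤ Q z)
    (hPQ : ∀ x y, P (x, y) = c y * Q (x, y)) (hpos : 0 < pXmj P j x) : 0 < pXmj Q j x := by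
  have hnn : ∀ y, 0 ≤ pYXmj Q j x y := fun y => Finset.sum_nonneg fun _ _ => hQ _
  refine lt_of_le_of_ne (pXmj_eq_sum_pYXmj Q j x ▸ Finset.sum_nonneg fun y _ => hnn y) ?_
  intro hzero
  have hslice : ∀ y, pYXmj Q j x y = 0 := fun y =>
    (Finset.sum_eq_zero_iff_of_nonneg fun y _ => hnn y).mp
      (pXmj_eq_sum_pYXmj Q j x ▸ hzero.symm) y (Finset.mem_univ _)
  simp [pXmj_eq_sum_mul_of_reweight hPQ, hslice] at hpos

theorem pX_update_mul_pXmj_of_reweight [Fintype B] (hPQ : ∀ x y, P (x, y) = c y * Q (x, y))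
    (hQind : CondIndep Q j) (hpos : 0 < pXmj Q j x) (a : A) :
    pX P (update x j a) * pXmj Q j x = pX Q (update x j a) * pXmj P j x := by
  rw [pX, pXmj_eq_sum_mul_of_reweight hPQ, Finset.sum_mul, Finset.mul_sum]
  refine Finset.sum_congr rfl fun y _ => ?_
  rw [hPQ]
  linear_combination c y * hQind x y a hpos

theorem CondIndep.of_reweight [Fintype B] (hQ : ∀ z, 0 ≤ Q z)
    (hPQ : ∀ x y, P (x, y) = c y * Q (x, y)) (hQind : CondIndep Q j) : CondIndep P j := by
  intro x y a hpos
  have hposQ := pXmj_pos_of_reweight hQ hPQ hpos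
  have hmarg := pX_update_mul_pXmj_of_reweight hPQ hQind hposQ a
  refine mul_right_cancel₀ hposQ.ne' ?_
  rw [hPQ, pYXmj_eq_mul_of_reweight hPQ]
  linear_combination c y * pXmj P j x * hQind x y a hposQ - c y * pYXmj Q j x y * hmarg

end Reweight

/-- Where `Q(Y = y) = 0` the junk value `x / 0 = 0` is harmless, since then `P(Y = y) = 0`. -/
theorem eq_pY_div_mul_of_same_covariate_conditional [Fintype A] {P Q : (Fin p → A) × B → ℝ}
    (hP : ∀ z, 0 ≤ P z)
    (hcond : ∀ (x : Fin p → A) (y : B), 0 < pY P y → P (x, y) * pY Q y = Q (x, y) * pY P y)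
    (hac : ∀ y : B, pY Q y = 0 → pY P y = 0) (x : Fin p → A) (y : B) :
    P (x, y) = pY P y / pY Q y * Q (x, y) := by
  have hnn : 0 ≤ pY P y := Finset.sum_nonneg fun x _ => hP (x, y)
  rcases hnn.lt_or_eq with hpos | hzero
  · have hQy : pY Q y ≠ 0 := fun h => hpos.ne' (hac y h)
    field_simp
    linarith [hcond x y hpos]
  · have hx : P (x, y) = 0 :=
      (Finset.sum_eq_zero_iff_of_nonneg fun x _ => hP (x, y)).mp hzero.symm x (Finset.mem_univ _)
    rw [hx, ← hzero, zero_div, zero_mul]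

/-- If `P(X|Y) = Q(X|Y)` on the support of `P` and `P(Y) ≪ Q(Y)`,
then conditional independence `Y ⊥ Xⱼ | X₋ⱼ` under `Q` implies it under `P`. -/
theorem condIndep_transfer_of_same_covariate_conditional
    [Fintype A] [Fintype B] (P Q : (Fin p → A) × B → ℝ) (j : Fin p)
    (hP : IsDist P) (hQ : IsDist Q)
    (hcond : ∀ (x : Fin p → A) (y : B), 0 < pY P y → P (x, y) * pY Q y = Q (x, y) * pY P y)
    (hac : ∀ y : B, pY Q y = 0 → pY P y = 0)
    (hQind : CondIndep Q j) :
    CondIndep P j :=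
  hQind.of_reweight hQ.1 (eq_pY_div_mul_of_same_covariate_conditional hP.1 hcond hac)
end

section
/- Let P and Q be joint distributions of (X, Y) with P(X|Y) = Q(X|Y) on the support of P and P(Y) absolutely continuous with respect to Q(Y). If Y ⊥ X_j | X_{-j} holds under Q, then the conditional distributions of X_j given X_{-j} coincide under P and Q: P(X_j | X_{-j}) = Q(X_j | X_{-j}) wherever both are defined. -/
/-!
Where `P(Y = y) > 0` the hypothesis `P(X | Y) = Q(X | Y)` gives `P(x, y) = Q(x, y) · w(y)` with
`w(y) = P(Y = y) / Q(Y = y)`, and where `P(Y = y) = 0` both sides vanish; so `P` is `Q` reweighted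
by a function of `y` alone. Under `Q`, given `X₋ⱼ`, the law of `Y` does not depend on `Xⱼ`, so
reweighting in `y` rescales every `P(Xⱼ = a, X₋ⱼ)` by the same factor `E_Q[w(Y) | X₋ⱼ]`, and that
factor cancels from `P(Xⱼ | X₋ⱼ)`.
-/

open Finset Function

variable {p : ℕ} {A B : Type*}

theorem eq_mul_pY_div_pY [Fintype A] {P Q : (Fin p → A) × B → ℝ} (hP : ∀ z, 0 ≤ P z)
    (hcond : ∀ (x : Fin p → A) (y : B), 0 < pY P y → P (x, y) * pY Q y = Q (x, y) * pY P y)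
    (hac : ∀ y : B, pY Q y = 0 → pY P y = 0) (x : Fin p → A) (y : B) :
    P (x, y) = Q (x, y) * (pY P y / pY Q y) := by
  have hPY : 0 ≤ pY P y := sum_nonneg fun x _ => hP (x, y)
  rcases hPY.eq_or_lt' with hPy | hPy
  · have hPxy : P (x, y) = 0 :=
      (sum_eq_zero_iff_of_nonneg fun x _ => hP (x, y)).mp hPy x (mem_univ x)
    rw [hPxy, hPy, zero_div, mul_zero]
  · have hQy : pY Q y ≠ 0 := fun h => hPy.ne' (hac y h)
    rw [mul_div_assoc', eq_div_iff hQy, hcond x y hPy]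

section Reweighting

variable {P Q : (Fin p → A) × B → ℝ} {w : B → ℝ}

theorem pX_eq_sum_mul_of_reweight [Fintype B] (hw : ∀ x y, P (x, y) = Q (x, y) * w y)
    (x : Fin p → A) : pX P x = ∑ y, Q (x, y) * w y :=
  sum_congr rfl fun y _ => hw x y

variable [Fintype A] [Fintype B]

theorem pXmj_eq_sum_pYXmj_mul_of_reweight (hw : ∀ x y, P (x, y) = Q (x, y) * w y) (j : Fin p)
    (x : Fin p → A) : pXmj P j x = ∑ y, pYXmj Q j x y * w y := by
  simp only [pXmj, pX_eq_sum_mul_of_reweight hw, pYXmj, sum_mul]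
  exact sum_comm

theorem pX_update_mul_pXmj_eq_of_reweight (hw : ∀ x y, P (x, y) = Q (x, y) * w y) {j : Fin p}
    (hQind : CondIndep Q j) {x : Fin p → A} (hQx : 0 < pXmj Q j x) (a : A) :
    pX P (update x j a) * pXmj Q j x = pX Q (update x j a) * pXmj P j x := by
  rw [pX_eq_sum_mul_of_reweight hw, pXmj_eq_sum_pYXmj_mul_of_reweight hw, sum_mul, mul_sum]
  refine sum_congr rfl fun y _ => ?_
  linear_combination w y * hQind x y a hQx

end Reweighting

theorem conditional_of_Xj_agrees_general
    [Fintype A] [Fintype B] (P Q : (Fin p → A) × B → ℝ) (j : Fin p)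
    (hP : IsDist P)
    (hcond : ∀ (x : Fin p → A) (y : B), 0 < pY P y → P (x, y) * pY Q y = Q (x, y) * pY P y)
    (hac : ∀ y : B, pY Q y = 0 → pY P y = 0)
    (hQind : CondIndep Q j) :
    ∀ (x : Fin p → A) (a : A), 0 < pXmj P j x → 0 < pXmj Q j x →
      pX P (Function.update x j a) * pXmj Q j x =
        pX Q (Function.update x j a) * pXmj P j x :=
  fun _ a _ hQx =>
    pX_update_mul_pXmj_eq_of_reweight (eq_mul_pY_div_pY hP.1 hcond hac) hQind hQx a

/-- If `P(X|Y) = Q(X|Y)` on the support of `P`, `P(Y) ≪ Q(Y)`, and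
`Y ⊥ Xⱼ | X₋ⱼ` under `Q`, then `P(Xⱼ | X₋ⱼ) = Q(Xⱼ | X₋ⱼ)` wherever both are defined. -/
theorem conditional_of_Xj_agrees
    [Fintype A] [Fintype B] (P Q : (Fin p → A) × B → ℝ) (j : Fin p)
    (hP : IsDist P) (hQ : IsDist Q)
    (hcond : ∀ (x : Fin p → A) (y : B), 0 < pY P y → P (x, y) * pY Q y = Q (x, y) * pY P y)
    (hac : ∀ y : B, pY Q y = 0 → pY P y = 0)
    (hQind : CondIndep Q j) :
    ∀ (x : Fin p → A) (a : A), 0 < pXmj P j x → 0 < pXmj Q j x →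
      pX P (Function.update x j a) * pXmj Q j x =
        pX Q (Function.update x j a) * pXmj P j x :=
  conditional_of_Xj_agrees_general P Q j hP hcond hac hQind
end

section
/- Let P and Q be joint distributions of (X, Y) with Y ∈ {0,1} such that P(X|Y=y) = Q(X|Y=y) for y ∈ {0,1}, and suppose P(Y=0), P(Y=1), Q(Y=0), Q(Y=1) are all positive. Then for any j, if Y ⊥ X_j | X_{-j} under Q, then P(X_j|X_{-j}) = Q(X_j|X_{-j}). -/
open Finset Function

variable {p : ℕ} {A B : Type*}

/-- **case-control.** Let `Y` be binary, `P(X | Y = y) = Q(X | Y = y)` for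
both `y`, and all four marginal probabilities `P(Y=0), P(Y=1), Q(Y=0), Q(Y=1)` positive.
If `Y ⊥ Xⱼ | X₋ⱼ` under `Q`, then `P(Xⱼ | X₋ⱼ) = Q(Xⱼ | X₋ⱼ)` wherever both defined. -/
theorem case_control_conditional_agrees
    [Fintype A] (P Q : (Fin p → A) × Bool → ℝ) (j : Fin p)
    (hP : IsDist P) (hQ : IsDist Q)
    (hPpos : ∀ y : Bool, 0 < pY P y) (hQpos : ∀ y : Bool, 0 < pY Q y)
    (hcond : ∀ (x : Fin p → A) (y : Bool), P (x, y) * pY Q y = Q (x, y) * pY P y)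
    (hQind : CondIndep Q j) :
    ∀ (x : Fin p → A) (a : A), 0 < pXmj P j x → 0 < pXmj Q j x →
      pX P (Function.update x j a) * pXmj Q j x =
        pX Q (Function.update x j a) * pXmj P j x := by
  intro x a hmP hmQ
  have hQ0 := hQind x false a hmQ
  have hQ1 := hQind x true a hmQ
  have hcf := hcond (Function.update x j a) false
  have hct := hcond (Function.update x j a) true
  have hpa : pX P (Function.update x j a)
      = P (Function.update x j a, true) + P (Function.update x j a, false) := by
    simp [pX]
  have hqa : pX Q (Function.update x j a)
      = Q (Function.update x j a, true) + Q (Function.update x j a, false) := by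
    simp [pX]
  have hmPe : pXmj P j x = pYXmj P j x true + pYXmj P j x false := by
    simp [pXmj, pYXmj, pX, Finset.sum_add_distrib]
  have hmQe : pXmj Q j x = pYXmj Q j x true + pYXmj Q j x false := by
    simp [pXmj, pYXmj, pX, Finset.sum_add_distrib]
  have hnf : pYXmj P j x false * pY Q false = pYXmj Q j x false * pY P false := by
    simp only [pYXmj, Finset.sum_mul]
    exact Finset.sum_congr rfl fun b _ => hcond _ false
  have hnt : pYXmj P j x true * pY Q true = pYXmj Q j x true * pY P true := by
    simp only [pYXmj, Finset.sum_mul]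
    exact Finset.sum_congr rfl fun b _ => hcond _ true
  have h0 : pY Q false ≠ 0 := ne_of_gt (hQpos false)
  have h1 : pY Q true ≠ 0 := ne_of_gt (hQpos true)
  apply mul_right_cancel₀ (mul_ne_zero h0 h1)
  linear_combination (pXmj Q j x * pY Q false * pY Q true) * hpa
    + (pXmj Q j x * pY Q false) * hct + (pXmj Q j x * pY Q true) * hcf
    + (pY P true * pY Q false) * hQ1 + (pY P false * pY Q true) * hQ0
    - (pX Q (Function.update x j a) * pY Q false * pY Q true) * hmPe
    - (pX Q (Function.update x j a) * pY Q false) * hnt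
    - (pX Q (Function.update x j a) * pY Q true) * hnf
end

section
/- Let Y be binary and let Q be a joint distribution of (X, Y) with 0 < Q(Y=1) < 1. Define P_0(X) = Q(X | Y=0) (controls-only population) and let P be any joint distribution with P(X) = a mixture α·Q(X|Y=0) + (1-α)·Q(X|Y=1) for some α ∈ [0,1], with P(X|Y)=Q(X|Y) and P(Y=1) = 1-α. If Y ⊥ X_j | X_{-j} under Q, then P(X_j | X_{-j}) = Q(X_j | X_{-j}) wherever both conditionals are defined, for any α ∈ (0,1). -/
/-!
Conditional independence says that every slice `Q(·, y)` has the same conditional law of `Xⱼ`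
given `X₋ⱼ` as `Q` itself: `Q(Xⱼ = a, X₋ⱼ, Y = y) · Q(X₋ⱼ) = Q(X₋ⱼ, Y = y) · Q(Xⱼ = a, X₋ⱼ)`.
This identity is linear in the slice, so it survives any reweighting `∑ y, w y · Q(·, y)`.
The mixture population is such a reweighting, with `w false = α / Q(Y = 0)` and
`w true = (1 - α) / Q(Y = 1)`.
-/
open Finset Function

variable {p : ℕ} {A B : Type*}

section Reweighting

variable {C : Type*} [Fintype A] [Fintype B] [Fintype C]

lemma pXmj_eq_sum_of_pX_eq_sum {P : (Fin p → A) × C → ℝ} {Q : (Fin p → A) × B → ℝ}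
    {w : B → ℝ} (hP : ∀ x, pX P x = ∑ y, w y * Q (x, y)) (j : Fin p) (x : Fin p → A) :
    pXmj P j x = ∑ y, w y * pYXmj Q j x y := by
  simp only [pXmj, pYXmj, hP, mul_sum]
  exact sum_comm

lemma CondIndep.pX_mul_pXmj_eq_of_pX_eq_sum {Q : (Fin p → A) × B → ℝ} {j : Fin p}
    (hQ : CondIndep Q j) {P : (Fin p → A) × C → ℝ} {w : B → ℝ}
    (hP : ∀ x, pX P x = ∑ y, w y * Q (x, y)) {x : Fin p → A} (hx : 0 < pXmj Q j x) (a : A) :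
    pX P (update x j a) * pXmj Q j x = pX Q (update x j a) * pXmj P j x :=
  calc pX P (update x j a) * pXmj Q j x
      = ∑ y, w y * (Q (update x j a, y) * pXmj Q j x) := by
        rw [hP, sum_mul]; simp only [mul_assoc]
    _ = ∑ y, w y * (pYXmj Q j x y * pX Q (update x j a)) := by simp only [hQ x _ a hx]
    _ = pX Q (update x j a) * pXmj P j x := by
      rw [pXmj_eq_sum_of_pX_eq_sum hP, mul_sum]
      exact sum_congr rfl fun y _ ↦ by ring

end Reweighting

theorem mixture_population_conditional_agrees_general
    [Fintype A] (P Q : (Fin p → A) × Bool → ℝ) (j : Fin p) (α : ℝ)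
    (hmix : ∀ x : Fin p → A,
      pX P x = α * (Q (x, false) / pY Q false) + (1 - α) * (Q (x, true) / pY Q true))
    (hQind : CondIndep Q j) :
    ∀ (x : Fin p → A) (a : A), 0 < pXmj P j x → 0 < pXmj Q j x →
      pX P (Function.update x j a) * pXmj Q j x =
        pX Q (Function.update x j a) * pXmj P j x := by
  intro x a _ hQx
  have hP : ∀ x, pX P x =
      ∑ y, (if y then (1 - α) / pY Q true else α / pY Q false) * Q (x, y) := by
    intro x
    rw [hmix, Fintype.sum_bool]
    simp only [if_true, Bool.false_eq_true, if_false]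
    ring
  exact hQind.pX_mul_pXmj_eq_of_pX_eq_sum hP hQx a

/-- **mixture populations.** Let `Y` be binary with `0 < Q(Y=1) < 1`, and
let `P` be a joint distribution with `P(X|Y) = Q(X|Y)`, `P(Y=1) = 1 - α`, and marginal
`P(X) = α·Q(X|Y=0) + (1-α)·Q(X|Y=1)` for some `α ∈ (0,1)` (a population mixing cases and
controls in an arbitrary proportion). If `Y ⊥ Xⱼ | X₋ⱼ` under `Q`, then
`P(Xⱼ | X₋ⱼ) = Q(Xⱼ | X₋ⱼ)` wherever both conditionals are defined. -/
theorem mixture_population_conditional_agrees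
    [Fintype A] (P Q : (Fin p → A) × Bool → ℝ) (j : Fin p) (α : ℝ)
    (hα : 0 < α) (hα' : α < 1)
    (hP : IsDist P) (hQ : IsDist Q)
    (hQ1 : 0 < pY Q true) (hQ1' : pY Q true < 1)
    (hcond : ∀ (x : Fin p → A) (y : Bool),
      0 < pY P y → P (x, y) * pY Q y = Q (x, y) * pY P y)
    (hPmarg : pY P true = 1 - α)
    (hmix : ∀ x : Fin p → A,
      pX P x = α * (Q (x, false) / pY Q false) + (1 - α) * (Q (x, true) / pY Q true))
    (hQind : CondIndep Q j) :
    ∀ (x : Fin p → A) (a : A), 0 < pXmj P j x → 0 < pXmj Q j x →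
      pX P (Function.update x j a) * pXmj Q j x =
        pX Q (Function.update x j a) * pXmj P j x :=
  mixture_population_conditional_agrees_general P Q j α hmix hQind
end
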